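/- Joint geodesic (midpoint) convexity of the log-determinant of a jointly linear map: let Φ_j : S^{n_j}_+ → S^n_+ (j in [m]) be strictly positive linear maps and g(P_1,...,P_m) := log det(Σ_j Φ_j(P_j)). Then for all positive definite tuples (P_j) and (Q_j), g(P_1 # Q_1, ..., P_m # Q_m) ≤ (1/2) g(P_1,...,P_m) + (1/2) g(Q_1,...,Q_m). -/

import Mathlib

/-!
By the matrix AM–GM inequality, `P # Q ≤ (t/2) P + (1/(2t)) Q` for every `t > 0`. Applying the
positive maps `Φ j` and summing gives `X ≤ (t/2) M + (1/(2t)) N` for `X = ∑ Φ j (P j # Q j)`,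
`M = ∑ Φ j (P j)`, `N = ∑ Φ j (Q j)`. A congruence `S` with `SᴴMS = 1` and `SᴴNS = diagonal μ`
turns this into `X' ≤ (t/2) + (1/(2t)) diagonal μ` for `X' = SᴴXS`; taking `t = X' i i` in the
`i`-th diagonal entry gives `(X' i i)² ≤ μ i`, and Hadamard's inequality `det X' ≤ ∏ X' i i`
yields `(det X)² ≤ det M · det N`, i.e. `2 log det X ≤ log det M + log det N`.
-/

open Matrix

/-- Real power of a matrix via the spectral decomposition (defined for Hermitian input). -/
noncomputable def mpow {d : ℕ} (A : Matrix (Fin d) (Fin d) ℝ) (t : ℝ) : Matrix (Fin d) (Fin d) ℝ :=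
  if hA : A.IsHermitian then
    (hA.eigenvectorUnitary : Matrix (Fin d) (Fin d) ℝ) *
      Matrix.diagonal (fun i => hA.eigenvalues i ^ t) *
      star (hA.eigenvectorUnitary : Matrix (Fin d) (Fin d) ℝ)
  else A

/-- The geodesic `X #ₜ Y = X^{1/2} (X^{-1/2} Y X^{-1/2})^t X^{1/2}`. -/
noncomputable def geo {d : ℕ} (X Y : Matrix (Fin d) (Fin d) ℝ) (t : ℝ) : Matrix (Fin d) (Fin d) ℝ :=
  mpow X (1/2) * mpow (mpow X (-(1/2)) * Y * mpow X (-(1/2))) t * mpow X (1/2)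

/-- The matrix geometric mean `X # Y`. -/
noncomputable def gmean {d : ℕ} (X Y : Matrix (Fin d) (Fin d) ℝ) : Matrix (Fin d) (Fin d) ℝ :=
  geo X Y (1/2)

section

variable {ι : Type*} [Fintype ι] [DecidableEq ι]

lemma Matrix.PosSemidef.det_le_exp_trace_sub_card {A : Matrix ι ι ℝ} (hA : A.PosSemidef) :
    A.det ≤ Real.exp (A.trace - Fintype.card ι) := by
  calc A.det = ∏ i, hA.1.eigenvalues i := by simpa using hA.1.det_eq_prod_eigenvalues
    _ ≤ ∏ i, Real.exp (hA.1.eigenvalues i - 1) :=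
        Finset.prod_le_prod (fun i _ => hA.eigenvalues_nonneg i) fun i _ => by
          linarith [Real.add_one_le_exp (hA.1.eigenvalues i - 1)]
    _ = Real.exp (A.trace - Fintype.card ι) := by
        rw [← Real.exp_sum, Finset.sum_sub_distrib, hA.1.trace_eq_sum_eigenvalues]
        simp

lemma Matrix.PosDef.det_le_prod_diag {A : Matrix ι ι ℝ} (hA : A.PosDef) :
    A.det ≤ ∏ i, A i i := by
  have hdiag (i : ι) : 0 < A i i := hA.diag_pos
  set E := diagonal fun i => (√(A i i))⁻¹
  have hB : (Eᴴ * A * E).PosSemidef := hA.posSemidef.conjTranspose_mul_mul_same E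
  have hBtrace : (Eᴴ * A * E).trace = Fintype.card ι := by
    have (i : ι) : (√(A i i))⁻¹ * A i i * (√(A i i))⁻¹ = 1 := by
      field_simp
      rw [Real.sq_sqrt (hdiag i).le, div_self (hdiag i).ne']
    simp [E, trace, diagonal_mul, mul_diagonal, this]
  have hBdet : (Eᴴ * A * E).det = A.det / ∏ i, A i i := by
    have (i : ι) : (√(A i i))⁻¹ * (√(A i i))⁻¹ = (A i i)⁻¹ := by
      rw [← mul_inv, Real.mul_self_sqrt (hdiag i).le]
    simp only [E, conjTranspose_eq_transpose_of_trivial, diagonal_transpose, det_mul,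
      det_diagonal, div_eq_mul_inv, ← Finset.prod_inv_distrib, ← this, Finset.prod_mul_distrib]
    ring
  have hB1 : (Eᴴ * A * E).det ≤ 1 := by
    simpa only [hBtrace, sub_self, Real.exp_zero] using hB.det_le_exp_trace_sub_card
  rwa [hBdet, div_le_one (Finset.prod_pos fun i _ => hdiag i)] at hB1

end

open Filter Topology in
lemma Matrix.PosSemidef.map_of_map_posDef {ι κ : Type*} [DecidableEq ι] [Fintype κ]
    (Φ : Matrix ι ι ℝ →ₗ[ℝ] Matrix κ κ ℝ)
    (hΦ : ∀ X, X.PosDef → (Φ X).PosDef) {X : Matrix ι ι ℝ} (hX : X.PosSemidef) :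
    (Φ X).PosSemidef := by
  have hpert {ε : ℝ} (hε : 0 < ε) : (Φ (X + ε • 1)).PosDef :=
    hΦ _ (PosDef.posSemidef_add hX (PosDef.one.smul hε))
  refine .of_dotProduct_mulVec_nonneg ?_ fun x => ?_
  · have : Φ X = Φ (X + (1 : ℝ) • 1) - Φ ((1 : ℝ) • 1) := by simp
    rw [this]
    exact (hpert one_pos).1.sub (hΦ _ (PosDef.one.smul one_pos)).1
  · set a := star x ⬝ᵥ Φ X *ᵥ x
    set c := star x ⬝ᵥ Φ 1 *ᵥ x
    have hlim : Tendsto (fun ε : ℝ => a + ε * c) (𝓝[>] 0) (𝓝 a) := by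
      have : Continuous fun ε : ℝ => a + ε * c := by fun_prop
      simpa using (this.tendsto 0).mono_left nhdsWithin_le_nhds
    refine ge_of_tendsto hlim (eventually_nhdsWithin_of_forall fun ε (hε : 0 < ε) => ?_)
    have := (hpert hε).posSemidef.dotProduct_mulVec_nonneg x
    simpa [add_mulVec, smul_mulVec, a, c] using this

section mpow

variable {d : ℕ} {A : Matrix (Fin d) (Fin d) ℝ}

lemma mpow_of_isHermitian (hA : A.IsHermitian) (t : ℝ) :
    mpow A t = (hA.eigenvectorUnitary : Matrix (Fin d) (Fin d) ℝ) *
      diagonal (fun i => hA.eigenvalues i ^ t) * star (hA.eigenvectorUnitary : Matrix _ _ ℝ) :=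
  dif_pos hA

lemma isHermitian_mpow (hA : A.IsHermitian) (t : ℝ) : (mpow A t).IsHermitian := by
  rw [mpow_of_isHermitian hA]
  exact isHermitian_mul_mul_conjTranspose _ (isHermitian_diagonal _)

lemma posDef_mpow (hA : A.PosDef) (t : ℝ) : (mpow A t).PosDef := by
  rw [mpow_of_isHermitian hA.1, Unitary.isUnit_coe.posDef_star_right_conjugate_iff,
    posDef_diagonal_iff]
  exact fun i => Real.rpow_pos_of_pos (hA.eigenvalues_pos i) t

lemma mpow_zero (hA : A.IsHermitian) : mpow A 0 = 1 := by
  simp [mpow_of_isHermitian hA]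

lemma mpow_one (hA : A.IsHermitian) : mpow A 1 = A := by
  conv_rhs => rw [hA.spectral_theorem]
  simp [mpow_of_isHermitian hA]

lemma mpow_mul_mpow (hA : A.PosDef) (s t : ℝ) : mpow A s * mpow A t = mpow A (s + t) := by
  have (i : Fin d) : hA.1.eigenvalues i ^ s * hA.1.eigenvalues i ^ t =
      hA.1.eigenvalues i ^ (s + t) := (Real.rpow_add (hA.eigenvalues_pos i) s t).symm
  simp only [mpow_of_isHermitian hA.1, mul_assoc, Unitary.coe_star_mul_self, ← mul_assoc (star _),
    one_mul]
  simp only [← mul_assoc, diagonal_mul_diagonal, this]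

lemma mpow_mul_mpow_neg (hA : A.PosDef) (t : ℝ) : mpow A t * mpow A (-t) = 1 := by
  rw [mpow_mul_mpow hA, add_neg_cancel, mpow_zero hA.1]

lemma mpow_neg_mul_mpow (hA : A.PosDef) (t : ℝ) : mpow A (-t) * mpow A t = 1 := by
  rw [mpow_mul_mpow hA, neg_add_cancel, mpow_zero hA.1]

lemma mpow_half_mul_mpow_half (hA : A.PosDef) : mpow A (1/2) * mpow A (1/2) = A := by
  rw [mpow_mul_mpow hA, add_halves, mpow_one hA.1]

end mpow

section gmean

variable {d : ℕ} {A B P Q : Matrix (Fin d) (Fin d) ℝ}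

lemma isUnit_mpow (hA : A.PosDef) (t : ℝ) : IsUnit (mpow A t) :=
  ⟨⟨_, _, mpow_mul_mpow_neg hA t, mpow_neg_mul_mpow hA t⟩, rfl⟩

lemma posDef_mpow_mul_mul_mpow (hA : A.PosDef) (t : ℝ) (hB : B.PosDef) :
    (mpow A t * B * mpow A t).PosDef := by
  have h := (isUnit_mpow hA t).posDef_star_left_conjugate_iff.2 hB
  rwa [star_eq_conjTranspose, (isHermitian_mpow hA.1 t).eq] at h

lemma gmean_posDef (hP : P.PosDef) (hQ : Q.PosDef) : (gmean P Q).PosDef :=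
  posDef_mpow_mul_mul_mpow hP _ (posDef_mpow (posDef_mpow_mul_mul_mpow hP _ hQ) _)

lemma posSemidef_smul_add_smul_sub_gmean (hP : P.PosDef) (hQ : Q.PosDef) {t : ℝ} (ht : 0 < t) :
    ((t / 2) • P + (t⁻¹ / 2) • Q - gmean P Q).PosSemidef := by
  set H := mpow P (1/2)
  set S := mpow P (-(1/2)) * Q * mpow P (-(1/2))
  set K := mpow S (1/2)
  have hS : S.PosDef := posDef_mpow_mul_mul_mpow hP _ hQ
  have hQ_eq : Q = H * (K * K) * H := by
    rw [mpow_half_mul_mpow_half hS]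
    simp only [S, H, ← mul_assoc, mpow_mul_mpow_neg hP, one_mul]
    rw [mul_assoc, mpow_neg_mul_mpow hP, mul_one]
  have hG : gmean P Q = H * K * H := rfl
  have hH : Hᴴ = H := (isHermitian_mpow hP.1 _).eq
  have hK : Kᴴ = K := (isHermitian_mpow hS.1 _).eq
  have hut : t⁻¹ * t = 1 := inv_mul_cancel₀ ht.ne'
  have key : (t / 2) • P + (t⁻¹ / 2) • Q - gmean P Q
      = (t⁻¹ / 2) • ((K * H - t • H)ᴴ * (K * H - t • H)) := by
    rw [hG, hQ_eq, ← mpow_half_mul_mpow_half hP]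
    simp only [conjTranspose_sub, conjTranspose_smul, conjTranspose_mul, star_trivial, hH, hK,
      sub_mul, mul_sub, smul_mul_assoc, mul_smul_comm, smul_sub, smul_smul, mul_assoc]
    linear_combination (norm := module) hut • (H * (K * H)) - (t / 2) • hut • (H * H)
  rw [key]
  exact (posSemidef_conjTranspose_mul_self _).smul (by positivity)

end gmean

section det

variable {d : ℕ} {X M N : Matrix (Fin d) (Fin d) ℝ}

lemma exists_conjTranspose_mul_mul_eq_one_and_diagonal (hM : M.PosDef) (hN : N.IsHermitian) :
    ∃ (S : Matrix (Fin d) (Fin d) ℝ) (μ : Fin d → ℝ),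
      Sᴴ * M * S = 1 ∧ Sᴴ * N * S = diagonal μ := by
  set R := mpow M (-(1/2))
  have hR : Rᴴ = R := (isHermitian_mpow hM.1 _).eq
  have hRMR : Rᴴ * M * R = 1 := by
    rw [hR, ← mpow_half_mul_mpow_half hM, ← mul_assoc, mpow_neg_mul_mpow hM, one_mul,
      mpow_mul_mpow_neg hM]
  have hN' : (Rᴴ * N * R).IsHermitian := isHermitian_conjTranspose_mul_mul R hN
  set U := (hN'.eigenvectorUnitary : Matrix (Fin d) (Fin d) ℝ)
  refine ⟨R * U, RCLike.ofReal ∘ hN'.eigenvalues, ?_, ?_⟩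
  · calc (R * U)ᴴ * M * (R * U) = Uᴴ * (Rᴴ * M * R) * U := by
          simp only [conjTranspose_mul, mul_assoc]
      _ = 1 := by
          rw [hRMR, mul_one, ← star_eq_conjTranspose, Unitary.coe_star_mul_self]
  · calc (R * U)ᴴ * N * (R * U) = star U * (Rᴴ * N * R) * star (star U) := by
          simp only [conjTranspose_mul, star_eq_conjTranspose, conjTranspose_conjTranspose,
            mul_assoc]
      _ = _ := hN'.conjStarAlgAut_star_eigenvectorUnitary

lemma det_sq_le_det_mul_det (hX : X.PosDef) (hM : M.PosDef) (hN : N.PosDef)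
    (h : ∀ t : ℝ, 0 < t → ((t / 2) • M + (t⁻¹ / 2) • N - X).PosSemidef) :
    X.det ^ 2 ≤ M.det * N.det := by
  obtain ⟨S, μ, hSM, hSN⟩ := exists_conjTranspose_mul_mul_eq_one_and_diagonal hM hN.1
  have hS : IsUnit S := (isUnit_iff_isUnit_det S).2 (isUnit_det_of_left_inverse hSM)
  set X' := Sᴴ * X * S
  have hX' : X'.PosDef := hX.conjTranspose_mul_mul_same (mulVec_injective_of_isUnit hS)
  have hdiag (i : Fin d) : X' i i ^ 2 ≤ μ i := by
    have hx : 0 < X' i i := hX'.diag_pos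
    have := ((h (X' i i) hx).conjTranspose_mul_mul_same S).diag_nonneg (i := i)
    simp only [mul_add, add_mul, mul_sub, sub_mul, mul_smul_comm, smul_mul_assoc, hSM, hSN,
      Matrix.sub_apply, Matrix.add_apply, Matrix.smul_apply, one_apply_eq, diagonal_apply_eq,
      smul_eq_mul] at this
    have key : X' i i ≤ (X' i i)⁻¹ * μ i := by linarith
    rwa [le_inv_mul_iff₀ hx, ← sq] at key
  have hdetS (A : Matrix (Fin d) (Fin d) ℝ) : (Sᴴ * A * S).det = S.det ^ 2 * A.det := by
    rw [det_mul, det_mul, det_conjTranspose, star_trivial]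
    ring
  have hSM' : S.det ^ 2 * M.det = 1 := by rw [← hdetS, hSM, det_one]
  have hSN' : S.det ^ 2 * N.det = ∏ i, μ i := by rw [← hdetS, hSN, det_diagonal]
  have hX'det : X'.det ^ 2 ≤ S.det ^ 2 * N.det := by
    calc X'.det ^ 2 ≤ (∏ i, X' i i) ^ 2 :=
          pow_le_pow_left₀ hX'.det_pos.le hX'.det_le_prod_diag 2
      _ = ∏ i, X' i i ^ 2 := (Finset.prod_pow _ _ _).symm
      _ ≤ ∏ i, μ i := Finset.prod_le_prod (fun i _ => sq_nonneg _) fun i _ => hdiag i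
      _ = S.det ^ 2 * N.det := hSN'.symm
  rw [hdetS] at hX'det
  have hs : 0 < S.det ^ 2 := lt_of_le_of_ne (sq_nonneg _) fun h0 => by simp [← h0] at hSM'
  have hsX : S.det ^ 2 * X.det ^ 2 ≤ N.det := by
    refine le_of_mul_le_mul_left ?_ hs
    linear_combination hX'det
  calc X.det ^ 2 = M.det * (S.det ^ 2 * X.det ^ 2) := by linear_combination (-X.det ^ 2) * hSM'
    _ ≤ M.det * N.det := by gcongr; exact hM.det_pos.le

end det

theorem stmt8 {n m : ℕ} (nj : Fin m → ℕ)
    (Φ : ∀ j : Fin m, Matrix (Fin (nj j)) (Fin (nj j)) ℝ →ₗ[ℝ] Matrix (Fin n) (Fin n) ℝ)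
    (hΦ : ∀ j, ∀ X : Matrix (Fin (nj j)) (Fin (nj j)) ℝ, X.PosDef → (Φ j X).PosDef)
    (P Q : ∀ j : Fin m, Matrix (Fin (nj j)) (Fin (nj j)) ℝ)
    (hP : ∀ j, (P j).PosDef) (hQ : ∀ j, (Q j).PosDef) :
    Real.log (∑ j, Φ j (gmean (P j) (Q j))).det ≤
      (1/2) * Real.log (∑ j, Φ j (P j)).det + (1/2) * Real.log (∑ j, Φ j (Q j)).det := by
  obtain hm | hm := isEmpty_or_nonempty (Fin m)
  · simp only [Finset.univ_eq_empty, Finset.sum_empty]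
    linarith
  set X := ∑ j, Φ j (gmean (P j) (Q j))
  set M := ∑ j, Φ j (P j)
  set N := ∑ j, Φ j (Q j)
  have hX : X.PosDef := posDef_sum Finset.univ_nonempty fun j _ =>
    hΦ j _ (gmean_posDef (hP j) (hQ j))
  have hM : M.PosDef := posDef_sum Finset.univ_nonempty fun j _ => hΦ j _ (hP j)
  have hN : N.PosDef := posDef_sum Finset.univ_nonempty fun j _ => hΦ j _ (hQ j)
  have hle (t : ℝ) (ht : 0 < t) : ((t / 2) • M + (t⁻¹ / 2) • N - X).PosSemidef := by
    have : (t / 2) • M + (t⁻¹ / 2) • N - X =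
        ∑ j, Φ j ((t / 2) • P j + (t⁻¹ / 2) • Q j - gmean (P j) (Q j)) := by
      simp only [map_sub, map_add, map_smul, Finset.sum_sub_distrib, Finset.sum_add_distrib,
        ← Finset.smul_sum, X, M, N]
    rw [this]
    exact posSemidef_sum _ fun j _ =>
      (posSemidef_smul_add_smul_sub_gmean (hP j) (hQ j) ht).map_of_map_posDef (Φ j) (hΦ j)
  have hlog := Real.log_le_log (pow_pos hX.det_pos 2) (det_sq_le_det_mul_det hX hM hN hle)
  rw [Real.log_pow, Real.log_mul hM.det_pos.ne' hN.det_pos.ne'] at hlog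
  push_cast at hlog
  linarith
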